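/- arXiv:1812.08676 — 7 statements merged into one kernel-verified Lean document; each statement's English description precedes it below -/
import Mathlib

section
/- Let θ, z : (a,b) → ℝ be C¹ functions with z > 0 satisfying θ'(t)² + cos²θ(t)/z(t)² = 1 and z'(t) = sin θ(t) for all t. If θ'(t₀) = 0 at some t₀ ∈ (a,b), then z(t₀) = 1 and sin θ(t₀) = 0. -/
/-!
Multiplying the curvature identity by `z²` shows that `g = z² - cos² θ` equals `(z θ')²` on the
interval. Hence `g ≥ 0` there and `g (t₀) = 0`, so `t₀` is a local minimum of `g` and
`g'(t₀) = 2 z sin θ + 2 cos θ sin θ θ'` vanishes. With `θ'(t₀) = 0` and `z > 0` this forces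
`sin θ(t₀) = 0`, so `cos² θ(t₀) = 1` and `g (t₀) = 0` gives `z(t₀)² = 1`.
-/

open Real

lemma sq_sub_sq_eq_mul_sq_of_sq_add_div_sq_eq_one {p c z : ℝ} (hz : z ≠ 0)
    (h : p ^ 2 + c ^ 2 / z ^ 2 = 1) : z ^ 2 - c ^ 2 = (z * p) ^ 2 := by
  field_simp at h
  linear_combination -h

lemma hasDerivAt_sq_sub_cos_sq {z θ : ℝ → ℝ} {z' θ' t : ℝ} (hz : HasDerivAt z z' t)
    (hθ : HasDerivAt θ θ' t) :
    HasDerivAt (fun s ↦ z s ^ 2 - cos (θ s) ^ 2)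
      (2 * z t * z' + 2 * cos (θ t) * sin (θ t) * θ') t :=
  ((hz.fun_pow 2).fun_sub (hθ.cos.fun_pow 2)).congr_deriv (by norm_num; ring)

theorem deriv_zero_imp_general (a b t₀ : ℝ) (θ z θ' : ℝ → ℝ)
    (ht₀ : t₀ ∈ Set.Ioo a b)
    (hzpos : ∀ t ∈ Set.Ioo a b, 0 < z t)
    (hθ : ∀ t ∈ Set.Ioo a b, HasDerivAt θ (θ' t) t)
    (hz' : ∀ t ∈ Set.Ioo a b, HasDerivAt z (Real.sin (θ t)) t)
    (heq : ∀ t ∈ Set.Ioo a b, (θ' t) ^ 2 + (Real.cos (θ t)) ^ 2 / (z t) ^ 2 = 1)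
    (h0 : θ' t₀ = 0) :
    z t₀ = 1 ∧ Real.sin (θ t₀) = 0 := by
  have hg : ∀ t ∈ Set.Ioo a b, z t ^ 2 - cos (θ t) ^ 2 = (z t * θ' t) ^ 2 := fun t ht ↦
    sq_sub_sq_eq_mul_sq_of_sq_add_div_sq_eq_one (hzpos t ht).ne' (heq t ht)
  have hmin : IsLocalMin (fun s ↦ z s ^ 2 - cos (θ s) ^ 2) t₀ := by
    filter_upwards [isOpen_Ioo.mem_nhds ht₀] with t ht
    rw [hg t ht, hg t₀ ht₀, h0, mul_zero, zero_pow two_ne_zero]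
    positivity
  have hderiv := hmin.hasDerivAt_eq_zero (hasDerivAt_sq_sub_cos_sq (hz' t₀ ht₀) (hθ t₀ ht₀))
  have hz₀ := hzpos t₀ ht₀
  have hsin : sin (θ t₀) = 0 := by
    rw [h0, mul_zero, add_zero] at hderiv
    simpa [hz₀.ne'] using hderiv
  have hcos : cos (θ t₀) ^ 2 = 1 := by
    linear_combination (sin_sq_add_cos_sq (θ t₀)) - sin (θ t₀) * hsin
  have hz₀sq : z t₀ ^ 2 = 1 := by
    have := hg t₀ ht₀
    rw [hcos, h0, mul_zero] at this
    linarith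
  exact ⟨(pow_eq_one_iff_of_nonneg hz₀.le two_ne_zero).mp hz₀sq, hsin⟩

theorem deriv_zero_imp (a b t₀ : ℝ) (θ z θ' : ℝ → ℝ)
    (ht₀ : t₀ ∈ Set.Ioo a b)
    (hzpos : ∀ t ∈ Set.Ioo a b, 0 < z t)
    (hθ : ∀ t ∈ Set.Ioo a b, HasDerivAt θ (θ' t) t)
    (hθ'c : ContinuousOn θ' (Set.Ioo a b))
    (hz' : ∀ t ∈ Set.Ioo a b, HasDerivAt z (Real.sin (θ t)) t)
    (heq : ∀ t ∈ Set.Ioo a b, (θ' t) ^ 2 + (Real.cos (θ t)) ^ 2 / (z t) ^ 2 = 1)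
    (h0 : θ' t₀ = 0) :
    z t₀ = 1 ∧ Real.sin (θ t₀) = 0 :=
  deriv_zero_imp_general a b t₀ θ z θ' ht₀ hzpos hθ hz' heq h0
end

section
/- Let θ, z : (a,b) → ℝ be C¹ functions with z > 0 satisfying θ'(t)² + cos²θ(t)/z(t)² = 1 and z'(t) = sin θ(t) for all t. If θ'(t₀) = 0 at some t₀ ∈ (a,b), then there exists δ > 0 such that z(s) ≥ 1 for all s ∈ (t₀ - δ, t₀ + δ) ∩ (a,b). -/
/-!
Where `θ' = 0`, the function `z² - cos² θ = (z θ')² ≥ 0` vanishes, so its derivative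
`2 z sin θ + 2 sin θ cos θ θ'` does too: `sin θ = 0`, whence `cos² θ = 1` and `z = 1`.
At a critical point of `z` we likewise get `cos² θ = 1` and so `z ≥ 1`; hence `z` cannot dip below
`1` between two points where `z ≥ 1`. Where `z ≤ 1` the equation gives `|θ'| ≤ |sin θ|`, so
Grönwall applied to `sin θ` keeps `z' = sin θ` at `0`: `z` stays equal to `1` on any interval
`[t₀, s]` on which `z ≤ 1`. Dips below `1` accumulating at `t₀` from the right would produce such
an interval with `z s < 1`. The left side follows by the reflection `t ↦ -t`.
-/

open Set Filter Topology Real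

structure IsUnitCurvatureProfile (U : Set ℝ) (θ z θ' : ℝ → ℝ) : Prop where
  pos : ∀ t ∈ U, 0 < z t
  hasDerivAt_angle : ∀ t ∈ U, HasDerivAt θ (θ' t) t
  hasDerivAt_height : ∀ t ∈ U, HasDerivAt z (sin (θ t)) t
  curvature_sq_add : ∀ t ∈ U, θ' t ^ 2 + cos (θ t) ^ 2 / z t ^ 2 = 1

namespace IsUnitCurvatureProfile

variable {U : Set ℝ} {θ z θ' : ℝ → ℝ} {t t₀ : ℝ}

theorem mul_deriv_sq (h : IsUnitCurvatureProfile U θ z θ') (ht : t ∈ U) :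
    (z t * θ' t) ^ 2 = z t ^ 2 - cos (θ t) ^ 2 := by
  have hz := (h.pos t ht).ne'
  have key := h.curvature_sq_add t ht
  field_simp at key
  linear_combination key

theorem one_le_of_sin_eq_zero (h : IsUnitCurvatureProfile U θ z θ') (ht : t ∈ U)
    (hs : sin (θ t) = 0) : 1 ≤ z t := by
  have hcos : cos (θ t) ^ 2 = 1 := by nlinarith [sin_sq_add_cos_sq (θ t)]
  have hsq : 1 ≤ z t ^ 2 := by nlinarith [h.mul_deriv_sq ht, sq_nonneg (z t * θ' t)]
  nlinarith [h.pos t ht]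

theorem abs_deriv_le_abs_sin (h : IsUnitCurvatureProfile U θ z θ') (ht : t ∈ U)
    (hle : z t ≤ 1) : |θ' t| ≤ |sin (θ t)| := by
  have hz := h.pos t ht
  have hz2 : z t ^ 2 ≤ 1 := by nlinarith
  have hmul : z t ^ 2 * θ' t ^ 2 ≤ z t ^ 2 * sin (θ t) ^ 2 := by
    nlinarith [h.mul_deriv_sq ht, sin_sq_add_cos_sq (θ t),
      mul_le_mul_of_nonneg_left hz2 (sq_nonneg (cos (θ t)))]
  exact sq_le_sq.1 (le_of_mul_le_mul_left hmul (by positivity))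

theorem sin_eq_zero_and_eq_one (h : IsUnitCurvatureProfile U θ z θ') (hU : U ∈ 𝓝 t)
    (h0 : θ' t = 0) : sin (θ t) = 0 ∧ z t = 1 := by
  have ht := mem_of_mem_nhds hU
  have hz := h.pos t ht
  have hmin : IsLocalMin (fun s => z s ^ 2 - cos (θ s) ^ 2) t := by
    filter_upwards [hU] with s hs
    show z t ^ 2 - cos (θ t) ^ 2 ≤ z s ^ 2 - cos (θ s) ^ 2
    rw [← h.mul_deriv_sq hs, ← h.mul_deriv_sq ht, h0, mul_zero, zero_pow two_ne_zero]
    positivity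
  have hderiv := ((h.hasDerivAt_height t ht).fun_pow 2).fun_sub
    ((h.hasDerivAt_angle t ht).cos.fun_pow 2)
  have hs : sin (θ t) = 0 := by simpa [h0, hz.ne'] using hmin.hasDerivAt_eq_zero hderiv
  refine ⟨hs, ?_⟩
  have hcos : cos (θ t) ^ 2 = 1 := by nlinarith [sin_sq_add_cos_sq (θ t)]
  have hsq := h.mul_deriv_sq ht
  rw [h0, hcos] at hsq
  nlinarith

theorem one_le_on_Icc (h : IsUnitCurvatureProfile U θ z θ') {p q : ℝ} (hsub : Icc p q ⊆ U)
    (hp : 1 ≤ z p) (hq : 1 ≤ z q) : ∀ t ∈ Icc p q, 1 ≤ z t := by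
  intro t ht
  have hcont : ContinuousOn z (Icc p q) := fun s hs =>
    (h.hasDerivAt_height s (hsub hs)).continuousAt.continuousWithinAt
  obtain ⟨c, hc, hmin⟩ := isCompact_Icc.exists_isMinOn ⟨t, ht⟩ hcont
  refine le_trans ?_ (hmin ht)
  rcases hc.1.eq_or_lt with rfl | hpc
  · exact hp
  rcases hc.2.eq_or_lt with rfl | hcq
  · exact hq
  have hloc : IsLocalMin z c := hmin.isLocalMin (Icc_mem_nhds hpc hcq)
  exact h.one_le_of_sin_eq_zero (hsub hc)
    (hloc.hasDerivAt_eq_zero (h.hasDerivAt_height c (hsub hc)))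

theorem eq_of_le_one_on_Icc (h : IsUnitCurvatureProfile U θ z θ') {x : ℝ}
    (hx : t₀ ≤ x) (hsub : Icc t₀ x ⊆ U) (hs : sin (θ t₀) = 0) (hle : ∀ t ∈ Icc t₀ x, z t ≤ 1) :
    z x = z t₀ := by
  have hsin : ∀ t ∈ Icc t₀ x, sin (θ t) = 0 := by
    refine eq_zero_of_abs_deriv_le_mul_abs_self_of_eq_zero_right (K := 1)
      (fun s hs => (h.hasDerivAt_angle s (hsub hs)).sin.continuousAt.continuousWithinAt)
      (fun s hs => (h.hasDerivAt_angle s (hsub (Ico_subset_Icc_self hs))).sin.hasDerivWithinAt)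
      hs fun s hs => ?_
    rw [norm_mul, one_mul, Real.norm_eq_abs, Real.norm_eq_abs]
    calc |cos (θ s)| * |θ' s| ≤ |θ' s| := mul_le_of_le_one_left (abs_nonneg _) (abs_cos_le_one _)
      _ ≤ |sin (θ s)| :=
        h.abs_deriv_le_abs_sin (hsub (Ico_subset_Icc_self hs)) (hle s (Ico_subset_Icc_self hs))
  refine constant_of_has_deriv_right_zero
    (fun s hs => (h.hasDerivAt_height s (hsub hs)).continuousAt.continuousWithinAt)
    (fun s hs => ?_) x (right_mem_Icc.2 hx)
  rw [← hsin s (Ico_subset_Icc_self hs)]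
  exact (h.hasDerivAt_height s (hsub (Ico_subset_Icc_self hs))).hasDerivWithinAt

theorem eventually_one_le_nhdsGE (h : IsUnitCurvatureProfile U θ z θ') (hU : U ∈ 𝓝[≥] t₀)
    (hz : z t₀ = 1) (hs : sin (θ t₀) = 0) : ∀ᶠ s in 𝓝[≥] t₀, 1 ≤ z s := by
  obtain ⟨u, htu, hsub⟩ := mem_nhdsGE_iff_exists_Icc_subset.1 hU
  by_contra hdip
  rw [not_eventually] at hdip
  obtain ⟨s₁, hzs₁, hs₁⟩ := (hdip.and_eventually (Icc_mem_nhdsGE htu)).exists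
  have hsub₁ : Icc t₀ s₁ ⊆ U := (Icc_subset_Icc_right hs₁.2).trans hsub
  have hle : ∀ t ∈ Icc t₀ s₁, z t ≤ 1 := by
    intro t ht
    by_contra! hzt
    rcases ht.1.eq_or_lt with rfl | ht₀t
    · linarith
    obtain ⟨s₂, hzs₂, hs₂⟩ := (hdip.and_eventually (Ico_mem_nhdsGE ht₀t)).exists
    exact hzs₂ (h.one_le_on_Icc ((Icc_subset_Icc_right ht.2).trans hsub₁) hz.ge hzt.le s₂
      (Ico_subset_Icc_self hs₂))
  have := h.eq_of_le_one_on_Icc hs₁.1 hsub₁ hs hle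
  exact hzs₁ (by linarith)

theorem reflect (h : IsUnitCurvatureProfile U θ z θ') :
    IsUnitCurvatureProfile (-U) (fun t => -θ (-t)) (fun t => z (-t)) (fun t => θ' (-t)) where
  pos t ht := h.pos (-t) ht
  hasDerivAt_angle t ht := by
    simpa [Function.comp_def] using
      ((h.hasDerivAt_angle (-t) ht).scomp t (hasDerivAt_neg t)).fun_neg
  hasDerivAt_height t ht := by
    simpa [Function.comp_def] using (h.hasDerivAt_height (-t) ht).scomp t (hasDerivAt_neg t)
  curvature_sq_add t ht := by simpa using h.curvature_sq_add (-t) ht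

theorem eventually_one_le_nhds (h : IsUnitCurvatureProfile U θ z θ') (hU : U ∈ 𝓝 t₀)
    (h0 : θ' t₀ = 0) : ∀ᶠ s in 𝓝 t₀, 1 ≤ z s := by
  obtain ⟨hs, hz⟩ := h.sin_eq_zero_and_eq_one hU h0
  have hright := h.eventually_one_le_nhdsGE (mem_nhdsWithin_of_mem_nhds hU) hz hs
  have hleft : ∀ᶠ s in 𝓝[≥] (-t₀), 1 ≤ z (-s) :=
    h.reflect.eventually_one_le_nhdsGE
      (tendsto_neg_nhdsGE.mono_right nhdsWithin_le_nhds (by simpa using hU))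
      (by simpa using hz) (by simpa using hs)
  rw [← nhdsLE_sup_nhdsGE]
  exact eventually_sup.2 ⟨by simpa using tendsto_neg_nhdsLE.eventually hleft, hright⟩

end IsUnitCurvatureProfile

theorem z_ge_one_near_general (a b t₀ : ℝ) (θ z θ' : ℝ → ℝ)
    (ht₀ : t₀ ∈ Set.Ioo a b)
    (hzpos : ∀ t ∈ Set.Ioo a b, 0 < z t)
    (hθ : ∀ t ∈ Set.Ioo a b, HasDerivAt θ (θ' t) t)
    (hz' : ∀ t ∈ Set.Ioo a b, HasDerivAt z (Real.sin (θ t)) t)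
    (heq : ∀ t ∈ Set.Ioo a b, (θ' t) ^ 2 + (Real.cos (θ t)) ^ 2 / (z t) ^ 2 = 1)
    (h0 : θ' t₀ = 0) :
    ∃ δ > 0, ∀ s ∈ Set.Ioo (t₀ - δ) (t₀ + δ) ∩ Set.Ioo a b, 1 ≤ z s := by
  have hprofile : IsUnitCurvatureProfile (Ioo a b) θ z θ' := ⟨hzpos, hθ, hz', heq⟩
  obtain ⟨δ, hδ, hball⟩ := Metric.eventually_nhds_iff_ball.1
    (hprofile.eventually_one_le_nhds (isOpen_Ioo.mem_nhds ht₀) h0)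
  exact ⟨δ, hδ, fun s hs => hball s (by rw [Real.ball_eq_Ioo]; exact hs.1)⟩

theorem z_ge_one_near (a b t₀ : ℝ) (θ z θ' : ℝ → ℝ)
    (ht₀ : t₀ ∈ Set.Ioo a b)
    (hzpos : ∀ t ∈ Set.Ioo a b, 0 < z t)
    (hθ : ∀ t ∈ Set.Ioo a b, HasDerivAt θ (θ' t) t)
    (hθ'c : ContinuousOn θ' (Set.Ioo a b))
    (hz' : ∀ t ∈ Set.Ioo a b, HasDerivAt z (Real.sin (θ t)) t)
    (heq : ∀ t ∈ Set.Ioo a b, (θ' t) ^ 2 + (Real.cos (θ t)) ^ 2 / (z t) ^ 2 = 1)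
    (h0 : θ' t₀ = 0) :
    ∃ δ > 0, ∀ s ∈ Set.Ioo (t₀ - δ) (t₀ + δ) ∩ Set.Ioo a b, 1 ≤ z s :=
  z_ge_one_near_general a b t₀ θ z θ' ht₀ hzpos hθ hz' heq h0
end

section
/- Let θ, z : (a,b) → ℝ be C¹ functions with z > 0 satisfying θ'(t)² + cos²θ(t)/z(t)² = 1 and z'(t) = sin θ(t) for all t ∈ (a,b). Then θ is monotone on (a,b). -/
/-!
Put `F = z² - cos² θ`. The equation says `F = (z θ')² ≥ 0`, and `F' = 2 sin θ (z + θ' cos θ)`.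
At a zero `p` of `θ'`, `F` is minimal, so `sin θ(p) = 0` and `cos θ(p) = ±1`. Near `p` the factor
`z + θ' cos θ` is positive and `θ` stays within `π/2` of `θ(p)`, so `F'` has the sign of
`cos θ(p) · (θ - θ(p))`. Since `F` rises from `0` between a zero of `θ'` and a later point where
`θ' ≠ 0`, `θ` must leave `θ(p)` in the direction of `cos θ(p)`: `cos θ(p) · θ' ≥ 0` right of `p`,
and left of `p` by the symmetry `t ↦ -t`, `θ ↦ -θ(-t)`. Hence "`θ' > 0`, or `θ' = 0` and
`cos θ > 0`" is locally constant on `(a, b)`, so constant, and `θ'` keeps its sign.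
-/

open Real Set Filter Topology

structure ProfileSystemAt (θ z θ' : ℝ → ℝ) (t : ℝ) : Prop where
  pos : 0 < z t
  hasDerivAt_angle : HasDerivAt θ (θ' t) t
  continuousAt_curvature : ContinuousAt θ' t
  hasDerivAt_height : HasDerivAt z (sin (θ t)) t
  sq_add_sq_eq_one : θ' t ^ 2 + cos (θ t) ^ 2 / z t ^ 2 = 1

namespace ProfileSystemAt

variable {θ z θ' : ℝ → ℝ} {t : ℝ}

theorem sq_sub_cos_sq_eq (h : ProfileSystemAt θ z θ' t) :
    z t ^ 2 - cos (θ t) ^ 2 = (z t * θ' t) ^ 2 := by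
  have hz := h.pos.ne'
  have h1 := h.sq_add_sq_eq_one
  field_simp at h1
  linear_combination -h1

theorem hasDerivAt_sq_sub_cos_sq (h : ProfileSystemAt θ z θ' t) :
    HasDerivAt (fun s => z s ^ 2 - cos (θ s) ^ 2)
      (2 * sin (θ t) * (z t + θ' t * cos (θ t))) t := by
  have hcos := (hasDerivAt_cos (θ t)).comp t h.hasDerivAt_angle
  refine ((h.hasDerivAt_height.pow 2).sub (hcos.pow 2)).congr_deriv ?_
  push_cast [Function.comp_apply]
  ring

theorem comp_neg (h : ProfileSystemAt θ z θ' (-t)) :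
    ProfileSystemAt (fun s => -θ (-s)) (fun s => z (-s)) (fun s => θ' (-s)) t where
  pos := h.pos
  hasDerivAt_angle := by
    refine (h.hasDerivAt_angle.comp t (hasDerivAt_neg t)).neg.congr_deriv ?_
    ring
  continuousAt_curvature := h.continuousAt_curvature.comp continuous_neg.continuousAt
  hasDerivAt_height := by
    refine (h.hasDerivAt_height.comp t (hasDerivAt_neg t)).congr_deriv ?_
    rw [sin_neg]
    ring
  sq_add_sq_eq_one := by simpa only [cos_neg] using h.sq_add_sq_eq_one

end ProfileSystemAt

theorem IsPreconnected.mul_pos_of_forall_ne_zero {s : Set ℝ} {f : ℝ → ℝ} (hs : IsPreconnected s)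
    (hf : ContinuousOn f s) (hf0 : ∀ x ∈ s, f x ≠ 0) {x y : ℝ} (hx : x ∈ s) (hy : y ∈ s) :
    0 < f x * f y := by
  by_contra! h
  rcases mul_nonpos_iff.mp h with ⟨hx0, hy0⟩ | ⟨hx0, hy0⟩
  · obtain ⟨w, hw, hw0⟩ := hs.intermediate_value hy hx hf ⟨hy0, hx0⟩
    exact hf0 w hw hw0
  · obtain ⟨w, hw, hw0⟩ := hs.intermediate_value hx hy hf ⟨hx0, hy0⟩
    exact hf0 w hw hw0

theorem Real.mul_sin_pos {x : ℝ} (hx0 : x ≠ 0) (hx : |x| < π) : 0 < x * sin x := by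
  rcases hx0.lt_or_gt with hneg | hpos
  · exact mul_pos_of_neg_of_neg hneg (sin_neg_of_neg_of_neg_pi_lt hneg (abs_lt.mp hx).1)
  · exact mul_pos hpos (sin_pos_of_pos_of_lt_pi hpos (abs_lt.mp hx).2)

section ProfileSystem

variable {θ z θ' : ℝ → ℝ} {U : Set ℝ}

theorem sin_eq_zero_of_curvature_eq_zero (hU : IsOpen U)
    (hsys : ∀ s ∈ U, ProfileSystemAt θ z θ' s) {p : ℝ} (hp : p ∈ U) (h0 : θ' p = 0) :
    sin (θ p) = 0 := by
  have hmin : IsLocalMin (fun s => z s ^ 2 - cos (θ s) ^ 2) p := by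
    filter_upwards [hU.mem_nhds hp] with s hs
    rw [(hsys s hs).sq_sub_cos_sq_eq, (hsys p hp).sq_sub_cos_sq_eq, h0, mul_zero,
      zero_pow two_ne_zero]
    positivity
  have hF' := hmin.hasDerivAt_eq_zero (hsys p hp).hasDerivAt_sq_sub_cos_sq
  rw [h0, zero_mul, add_zero] at hF'
  simpa [(hsys p hp).pos.ne'] using hF'

theorem cos_mul_curvature_pos {q t : ℝ} (hqt : q < t)
    (hsys : ∀ s ∈ Icc q t, ProfileSystemAt θ z θ' s) (h0 : θ' q = 0) (hsin : sin (θ q) = 0)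
    (hangle : ∀ s ∈ Icc q t, |θ s - θ q| < π) (hpos : ∀ s ∈ Icc q t, 0 < z s + θ' s * cos (θ s))
    (hne : ∀ s ∈ Ioc q t, θ' s ≠ 0) :
    0 < cos (θ q) * θ' t := by
  have hqt' : t ∈ Icc q t := ⟨hqt.le, le_rfl⟩
  have hFq := (hsys q (left_mem_Icc.mpr hqt.le)).sq_sub_cos_sq_eq
  have hFt := (hsys t hqt').sq_sub_cos_sq_eq
  have hzθ't : z t * θ' t ≠ 0 := mul_ne_zero (hsys t hqt').pos.ne' (hne t ⟨hqt, le_rfl⟩)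
  obtain ⟨ξ, hξ, hFξ⟩ := exists_hasDerivAt_eq_slope (fun s => z s ^ 2 - cos (θ s) ^ 2) _ hqt
    (fun s hs => (hsys s hs).hasDerivAt_sq_sub_cos_sq.continuousAt.continuousWithinAt)
    (fun s hs => (hsys s (Ioo_subset_Icc_self hs)).hasDerivAt_sq_sub_cos_sq)
  have hξ' : ξ ∈ Icc q t := Ioo_subset_Icc_self hξ
  have hsinξ : 0 < sin (θ ξ) := by
    have : 0 < 2 * sin (θ ξ) * (z ξ + θ' ξ * cos (θ ξ)) := by
      rw [hFξ, hFq, hFt, h0]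
      rw [mul_zero, zero_pow two_ne_zero, sub_zero]
      exact div_pos (by positivity) (sub_pos.mpr hqt)
    exact pos_of_mul_pos_right (pos_of_mul_pos_left this (hpos ξ hξ').le) zero_le_two
  obtain ⟨η, hη, hθη⟩ := exists_hasDerivAt_eq_slope θ θ' hξ.1
    (fun s hs => (hsys s ⟨hs.1, hs.2.trans hξ.2.le⟩).hasDerivAt_angle.continuousAt.continuousWithinAt)
    (fun s hs => (hsys s ⟨hs.1.le, hs.2.le.trans hξ.2.le⟩).hasDerivAt_angle)
  have hsame : 0 < θ' η * θ' t :=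
    isPreconnected_Ioc.mul_pos_of_forall_ne_zero
      (fun s hs => (hsys s (Ioc_subset_Icc_self hs)).continuousAt_curvature.continuousWithinAt)
      hne ⟨hη.1, hη.2.le.trans hξ.2.le⟩ ⟨hqt, le_rfl⟩
  set φ := θ ξ - θ q
  have hsinφ : sin (θ ξ) = cos (θ q) * sin φ := by
    rw [show θ ξ = θ q + φ by ring, sin_add, hsin]
    ring
  have hφη : φ = θ' η * (ξ - q) := by
    rw [hθη]
    field_simp [(sub_pos.mpr hξ.1).ne']
  rw [hsinφ] at hsinξ
  have hφsin : 0 < φ * sin φ :=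
    mul_sin_pos (fun h => by simp [h] at hsinξ) (hangle ξ hξ')
  have hη_pos : 0 < cos (θ q) * θ' η := by
    have hξq : 0 < ξ - q := sub_pos.mpr hξ.1
    refine pos_of_mul_pos_left (b := (ξ - q) * sin φ ^ 2) ?_ (by positivity)
    convert mul_pos hsinξ hφsin using 1
    rw [hφη]
    ring
  refine pos_of_mul_pos_left (b := θ' η ^ 2) ?_ (sq_nonneg _)
  convert mul_pos hη_pos hsame using 1
  ring

theorem eventually_near_curvature_zero (hU : IsOpen U)
    (hsys : ∀ s ∈ U, ProfileSystemAt θ z θ' s) {p : ℝ} (hp : p ∈ U) (h0 : θ' p = 0) :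
    ∀ᶠ s in 𝓝 p, |θ s - θ p| < π / 2 ∧
      0 < z s + θ' s * cos (θ s) ∧ 0 < cos (θ p) * cos (θ s) := by
  have hsp := hsys p hp
  have hθ := hsp.hasDerivAt_angle.continuousAt
  have hcosθ : ContinuousAt (fun s => cos (θ s)) p := continuous_cos.continuousAt.comp hθ
  refine Eventually.and ?_ (Eventually.and ?_ ?_)
  · exact (hθ.sub continuousAt_const).abs.eventually
      (eventually_lt_nhds (by simpa using pi_div_two_pos))
  · exact (hsp.hasDerivAt_height.continuousAt.add
      (hsp.continuousAt_curvature.mul hcosθ)).eventually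
      (eventually_gt_nhds (by simpa [h0] using hsp.pos))
  · have hcc : 0 < cos (θ p) * cos (θ p) := by
      nlinarith [sin_sq_add_cos_sq (θ p), sin_eq_zero_of_curvature_eq_zero hU hsys hp h0]
    exact (continuousAt_const.mul hcosθ).eventually (eventually_gt_nhds hcc)

theorem eventually_nhdsGE_cos_mul_curvature_nonneg (hU : IsOpen U)
    (hsys : ∀ s ∈ U, ProfileSystemAt θ z θ' s) {p : ℝ} (hp : p ∈ U) (h0 : θ' p = 0) :
    ∀ᶠ y in 𝓝[≥] p, 0 ≤ cos (θ p) * θ' y := by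
  have hwindow := (hU.eventually_mem hp).and (eventually_near_curvature_zero hU hsys hp h0)
  obtain ⟨u, hpu, hu⟩ := mem_nhdsGE_iff_exists_Icc_subset.mp (nhdsWithin_le_nhds hwindow)
  filter_upwards [Icc_mem_nhdsGE hpu] with y hy
  rcases eq_or_ne (θ' y) 0 with hy0 | hy0
  · simp [hy0]
  -- `q` is the last zero of `θ'` before `y`
  set Z := Icc p y ∩ θ' ⁻¹' {0}
  have hZ : IsClosed Z := ContinuousOn.preimage_isClosed_of_isClosed
    (fun s hs => (hsys s (hu ⟨hs.1, hs.2.trans hy.2⟩).1).continuousAt_curvature.continuousWithinAt)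
    isClosed_Icc isClosed_singleton
  have hZbdd : BddAbove Z := ⟨y, fun s hs => hs.1.2⟩
  have hq : sSup Z ∈ Z := hZ.csSup_mem ⟨p, ⟨le_rfl, hy.1⟩, h0⟩ hZbdd
  set q := sSup Z
  have hqy : q < y := hq.1.2.lt_of_ne fun h => hy0 (h ▸ hq.2)
  have hwin : ∀ s ∈ Icc q y, _ := fun s hs => hu ⟨hq.1.1.trans hs.1, hs.2.trans hy.2⟩
  have hqwin := hwin q (left_mem_Icc.mpr hqy.le)
  have hne : ∀ s ∈ Ioc q y, θ' s ≠ 0 := fun s hs hs0 =>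
    (le_csSup hZbdd ⟨⟨hq.1.1.trans hs.1.le, hs.2⟩, hs0⟩).not_gt hs.1
  have hqpos := cos_mul_curvature_pos hqy (fun s hs => hsys s (hwin s hs).1) hq.2
    (sin_eq_zero_of_curvature_eq_zero hU hsys hqwin.1 hq.2)
    (fun s hs => by
      linarith [abs_sub_le (θ s) (θ p) (θ q), abs_sub_comm (θ p) (θ q), (hwin s hs).2.1,
        hqwin.2.1])
    (fun s hs => (hwin s hs).2.2.1) hne
  refine (pos_of_mul_pos_left (b := cos (θ q) ^ 2) ?_ (sq_nonneg _)).le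
  convert mul_pos hqwin.2.2.2 hqpos using 1
  ring

theorem eventually_nhds_cos_mul_curvature_nonneg (hU : IsOpen U)
    (hsys : ∀ s ∈ U, ProfileSystemAt θ z θ' s) {p : ℝ} (hp : p ∈ U) (h0 : θ' p = 0) :
    ∀ᶠ y in 𝓝 p, 0 ≤ cos (θ p) * θ' y := by
  have hreflected := eventually_nhdsGE_cos_mul_curvature_nonneg (hU.preimage continuous_neg)
    (fun s hs => (hsys (-s) hs).comp_neg) (show - -p ∈ U by simpa using hp)
    (show θ' (- -p) = 0 by simpa using h0)
  have hneg : Tendsto Neg.neg (𝓝[≤] p) (𝓝[≥] (-p)) :=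
    continuous_neg.continuousWithinAt.tendsto_nhdsWithin fun y (hy : y ≤ p) => neg_le_neg hy
  rw [← nhdsLE_sup_nhdsGE, eventually_sup]
  refine ⟨(hneg.eventually hreflected).mono fun y hy => ?_,
    eventually_nhdsGE_cos_mul_curvature_nonneg hU hsys hp h0⟩
  simpa only [neg_neg, cos_neg] using hy

def TurnsPositivelyAt (θ θ' : ℝ → ℝ) (t : ℝ) : Prop :=
  0 < θ' t ∨ θ' t = 0 ∧ 0 < cos (θ t)

theorem eventually_turnsPositivelyAt_iff (hU : IsOpen U)
    (hsys : ∀ s ∈ U, ProfileSystemAt θ z θ' s) {p : ℝ} (hp : p ∈ U) :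
    ∀ᶠ y in 𝓝 p, TurnsPositivelyAt θ θ' p ↔ TurnsPositivelyAt θ θ' y := by
  have hcurv := (hsys p hp).continuousAt_curvature
  rcases lt_trichotomy (θ' p) 0 with hneg | h0 | hpos
  · filter_upwards [hcurv.eventually (eventually_lt_nhds hneg)] with y hy
    simp [TurnsPositivelyAt, hneg.not_gt, hneg.ne, hy.not_gt, hy.ne]
  · have hwindow := eventually_near_curvature_zero hU hsys hp h0
    have hcc : 0 < cos (θ p) * cos (θ p) := hwindow.self_of_nhds.2.2
    filter_upwards [eventually_nhds_cos_mul_curvature_nonneg hU hsys hp h0,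
      hwindow.mono fun _ h => h.2.2] with y hy hcy
    simp only [TurnsPositivelyAt, h0, lt_irrefl, false_or, true_and]
    constructor
    · intro hc
      rcases (nonneg_of_mul_nonneg_right hy hc).lt_or_eq with hy' | hy'
      · exact Or.inl hy'
      · exact Or.inr ⟨hy'.symm, pos_of_mul_pos_right hcy hc.le⟩
    · rintro (hy' | ⟨-, hy'⟩)
      · exact (nonneg_of_mul_nonneg_left hy hy').lt_of_ne fun hc => by simp [← hc] at hcc
      · exact pos_of_mul_pos_left hcy hy'.le
  · filter_upwards [hcurv.eventually (eventually_gt_nhds hpos)] with y hy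
    simp [TurnsPositivelyAt, hpos, hy]

end ProfileSystem

theorem theta_monotone (a b : ℝ) (θ z θ' : ℝ → ℝ)
    (hzpos : ∀ t ∈ Set.Ioo a b, 0 < z t)
    (hθ : ∀ t ∈ Set.Ioo a b, HasDerivAt θ (θ' t) t)
    (hθ'c : ContinuousOn θ' (Set.Ioo a b))
    (hz' : ∀ t ∈ Set.Ioo a b, HasDerivAt z (Real.sin (θ t)) t)
    (heq : ∀ t ∈ Set.Ioo a b, (θ' t) ^ 2 + (Real.cos (θ t)) ^ 2 / (z t) ^ 2 = 1) :
    MonotoneOn θ (Set.Ioo a b) ∨ AntitoneOn θ (Set.Ioo a b) := by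
  have hsys : ∀ t ∈ Ioo a b, ProfileSystemAt θ z θ' t := fun t ht =>
    ⟨hzpos t ht, hθ t ht, hθ'c.continuousAt (Ioo_mem_nhds ht.1 ht.2), hz' t ht, heq t ht⟩
  have hconst : ∀ x ∈ Ioo a b, ∀ y ∈ Ioo a b,
      TurnsPositivelyAt θ θ' x → TurnsPositivelyAt θ θ' y := fun x hx y hy =>
    (isPreconnected_Ioo.induction₂ (fun x y => TurnsPositivelyAt θ θ' x ↔ TurnsPositivelyAt θ θ' y)
      (fun x hx => eventually_nhdsWithin_of_eventually_nhds
        (eventually_turnsPositivelyAt_iff isOpen_Ioo hsys hx))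
      (fun _ _ _ _ _ _ => Iff.trans) (fun _ _ _ _ => Iff.symm) hx hy).mp
  have hcont : ContinuousOn θ (Ioo a b) := fun t ht => (hθ t ht).continuousAt.continuousWithinAt
  have hderiv : ∀ t ∈ interior (Ioo a b), HasDerivWithinAt θ (θ' t) (interior (Ioo a b)) t := by
    rw [interior_Ioo]
    exact fun t ht => (hθ t ht).hasDerivWithinAt
  by_cases hpos : ∃ x ∈ Ioo a b, TurnsPositivelyAt θ θ' x
  · obtain ⟨x, hx, hxpos⟩ := hpos
    refine .inl (monotoneOn_of_hasDerivWithinAt_nonneg (convex_Ioo a b) hcont hderiv ?_)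
    rw [interior_Ioo]
    intro t ht
    rcases hconst x hx t ht hxpos with h | h
    exacts [h.le, h.1.ge]
  · push Not at hpos
    refine .inr (antitoneOn_of_hasDerivWithinAt_nonpos (convex_Ioo a b) hcont hderiv ?_)
    rw [interior_Ioo]
    exact fun t ht => not_lt.mp fun h => hpos t ht (.inl h)
end

section
/- Let X(θ,z) = (√(1 - cos²θ/z²), sin θ) on Ω = {(θ,z) : z > |cos θ|}, n ∈ ℤ, and let φ : (-b, b) → Ω be an integral curve of X with φ(0) = (nπ, z₀) for some z₀ > 1. Then the curve σ(t) = (2nπ - θ(-t), z(-t)), where φ = (θ, z), is also an integral curve of X defined on (-b, b), and σ(0) = φ(0). -/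
noncomputable def X (p : ℝ × ℝ) : ℝ × ℝ :=
  (Real.sqrt (1 - (Real.cos p.1) ^ 2 / p.2 ^ 2), Real.sin p.1)

def Ω : Set (ℝ × ℝ) := {p | |Real.cos p.1| < p.2}

/-! The reflection `R (θ, z) = (2nπ - θ, z)` in the line `θ = nπ` preserves `Ω` and reverses `X`
up to its own differential: `X (R p) = -dR (X p)`, because `cos` is even and `sin` odd about `nπ`.
Hence `R ∘ φ ∘ (t ↦ -t)` is again an integral curve, and it starts where `φ` does since
`φ 0` lies on the axis of the reflection. -/

open Real

noncomputable def reflectTheta (n : ℤ) (p : ℝ × ℝ) : ℝ × ℝ := (2 * (n : ℝ) * π - p.1, p.2)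

lemma cos_reflectTheta_fst (n : ℤ) (p : ℝ × ℝ) : cos (reflectTheta n p).1 = cos p.1 := by
  rw [reflectTheta, show 2 * (n : ℝ) * π - p.1 = n * (2 * π) - p.1 by ring,
    cos_int_mul_two_pi_sub]

lemma sin_reflectTheta_fst (n : ℤ) (p : ℝ × ℝ) : sin (reflectTheta n p).1 = -sin p.1 := by
  rw [reflectTheta, show 2 * (n : ℝ) * π - p.1 = n * (2 * π) - p.1 by ring,
    sin_int_mul_two_pi_sub]

lemma reflectTheta_mem_Ω_iff (n : ℤ) (p : ℝ × ℝ) : reflectTheta n p ∈ Ω ↔ p ∈ Ω := by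
  simp only [Ω, Set.mem_ofPred_eq, cos_reflectTheta_fst]
  rfl

lemma X_reflectTheta (n : ℤ) (p : ℝ × ℝ) : X (reflectTheta n p) = ((X p).1, -(X p).2) := by
  simp only [X, cos_reflectTheta_fst, sin_reflectTheta_fst]
  rfl

lemma reflectTheta_of_fst_eq {n : ℤ} {p : ℝ × ℝ} (hp : p.1 = n * π) : reflectTheta n p = p := by
  ext
  · simp only [reflectTheta, hp]
    ring
  · rfl

lemma hasDerivAt_reflectTheta_comp_neg (n : ℤ) {φ : ℝ → ℝ × ℝ} {v : ℝ × ℝ} {t : ℝ}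
    (h : HasDerivAt φ v (-t)) :
    HasDerivAt (fun s => reflectTheta n (φ (-s))) (v.1, -v.2) t := by
  have hrev : HasDerivAt (fun s => φ (-s)) ((-1 : ℝ) • v) t := h.scomp t (hasDerivAt_neg t)
  rw [neg_one_smul] at hrev
  have hθ : HasDerivAt (fun s => (φ (-s)).1) (-v.1) t := hrev.fst
  have hz : HasDerivAt (fun s => (φ (-s)).2) (-v.2) t := hrev.snd
  have hreflect := (hθ.const_sub (2 * (n : ℝ) * π)).prodMk hz
  rw [neg_neg] at hreflect
  exact hreflect

theorem reflected_integral_curve_general (b z₀ : ℝ) (n : ℤ) (φ : ℝ → ℝ × ℝ)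
    (hφ0 : φ 0 = ((n : ℝ) * Real.pi, z₀))
    (hmem : ∀ t ∈ Set.Ioo (-b) b, φ t ∈ Ω)
    (hint : ∀ t ∈ Set.Ioo (-b) b, HasDerivAt φ (X (φ t)) t) :
    (∀ t ∈ Set.Ioo (-b) b,
      ((2 * (n : ℝ) * Real.pi - (φ (-t)).1, (φ (-t)).2) : ℝ × ℝ) ∈ Ω ∧
      HasDerivAt (fun s => ((2 * (n : ℝ) * Real.pi - (φ (-s)).1, (φ (-s)).2) : ℝ × ℝ))
        (X ((2 * (n : ℝ) * Real.pi - (φ (-t)).1, (φ (-t)).2))) t) ∧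
    ((2 * (n : ℝ) * Real.pi - (φ (-(0:ℝ))).1, (φ (-(0:ℝ))).2) : ℝ × ℝ) = φ 0 := by
  refine ⟨fun t ht => ?_, ?_⟩
  · have ht' : -t ∈ Set.Ioo (-b) b := ⟨by linarith [ht.2], by linarith [ht.1]⟩
    have hderiv := hasDerivAt_reflectTheta_comp_neg n (hint (-t) ht')
    rw [← X_reflectTheta] at hderiv
    exact ⟨(reflectTheta_mem_Ω_iff n _).2 (hmem (-t) ht'), hderiv⟩
  · rw [neg_zero]
    exact reflectTheta_of_fst_eq (by rw [hφ0])

theorem reflected_integral_curve (b z₀ : ℝ) (n : ℤ) (φ : ℝ → ℝ × ℝ)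
    (hz₀ : 1 < z₀)
    (hφ0 : φ 0 = ((n : ℝ) * Real.pi, z₀))
    (hmem : ∀ t ∈ Set.Ioo (-b) b, φ t ∈ Ω)
    (hint : ∀ t ∈ Set.Ioo (-b) b, HasDerivAt φ (X (φ t)) t) :
    (∀ t ∈ Set.Ioo (-b) b,
      ((2 * (n : ℝ) * Real.pi - (φ (-t)).1, (φ (-t)).2) : ℝ × ℝ) ∈ Ω ∧
      HasDerivAt (fun s => ((2 * (n : ℝ) * Real.pi - (φ (-s)).1, (φ (-s)).2) : ℝ × ℝ))
        (X ((2 * (n : ℝ) * Real.pi - (φ (-t)).1, (φ (-t)).2))) t) ∧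
    ((2 * (n : ℝ) * Real.pi - (φ (-(0:ℝ))).1, (φ (-(0:ℝ))).2) : ℝ × ℝ) = φ 0 :=
  reflected_integral_curve_general b z₀ n φ hφ0 hmem hint
end

section
/- Let θ, z : (a,b) → ℝ be C¹ functions with z > 0 satisfying θ'(t)² + cos²θ(t)/z(t)² = 1 and z'(t) = sin θ(t). Suppose θ' > 0 on (a,b), 0 < θ(t) < π for all t, and z(t) < 1 for all t ∈ (a,b). Then for all t₁ < t₂ in (a,b), z(t₂) - z(t₁) ≥ θ(t₂) - θ(t₁). -/
theorem z_advance_ge_theta (a b : ℝ) (θ z θ' : ℝ → ℝ)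
    (hzpos : ∀ t ∈ Set.Ioo a b, 0 < z t)
    (hθ : ∀ t ∈ Set.Ioo a b, HasDerivAt θ (θ' t) t)
    (hθ'c : ContinuousOn θ' (Set.Ioo a b))
    (hz' : ∀ t ∈ Set.Ioo a b, HasDerivAt z (Real.sin (θ t)) t)
    (heq : ∀ t ∈ Set.Ioo a b, (θ' t) ^ 2 + (Real.cos (θ t)) ^ 2 / (z t) ^ 2 = 1)
    (hθ'pos : ∀ t ∈ Set.Ioo a b, 0 < θ' t)
    (hθrange : ∀ t ∈ Set.Ioo a b, 0 < θ t ∧ θ t < Real.pi)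
    (hzlt : ∀ t ∈ Set.Ioo a b, z t < 1) :
    ∀ t₁ ∈ Set.Ioo a b, ∀ t₂ ∈ Set.Ioo a b, t₁ < t₂ →
      z t₂ - z t₁ ≥ θ t₂ - θ t₁ := by
  -- key pointwise inequality: θ' t ≤ sin (θ t)
  have key : ∀ t ∈ Set.Ioo a b, θ' t ≤ Real.sin (θ t) := by
    intro t ht
    have hzp := hzpos t ht
    have hz1 := hzlt t ht
    have hsin : 0 < Real.sin (θ t) :=
      Real.sin_pos_of_pos_of_lt_pi (hθrange t ht).1 (hθrange t ht).2
    have hz2 : z t ^ 2 ≤ 1 := by nlinarith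
    have hcc : Real.cos (θ t) ^ 2 ≤ Real.cos (θ t) ^ 2 / z t ^ 2 := by
      rw [le_div_iff₀ (by positivity)]
      nlinarith [sq_nonneg (Real.cos (θ t))]
    have hsq : θ' t ^ 2 ≤ Real.sin (θ t) ^ 2 := by
      have := heq t ht
      have hpyth := Real.sin_sq_add_cos_sq (θ t)
      nlinarith
    nlinarith [hθ'pos t ht]
  -- f = z - θ has nonneg derivative
  set f : ℝ → ℝ := fun t => z t - θ t with hf
  have hmono : MonotoneOn f (Set.Ioo a b) := by
    apply monotoneOn_of_deriv_nonneg (convex_Ioo a b)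
    · exact ContinuousOn.sub
        (fun t ht => ((hz' t ht).continuousAt).continuousWithinAt)
        (fun t ht => ((hθ t ht).continuousAt).continuousWithinAt)
    · intro t ht
      rw [interior_Ioo] at ht
      exact ((hz' t ht).sub (hθ t ht)).differentiableAt.differentiableWithinAt
    · intro t ht
      rw [interior_Ioo] at ht
      have hd : deriv f t = Real.sin (θ t) - θ' t :=
        ((hz' t ht).sub (hθ t ht)).deriv
      rw [hd]
      linarith [key t ht]
  intro t₁ h₁ t₂ h₂ hlt
  have := hmono h₁ h₂ hlt.le
  simp only [hf] at this
  linarith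
end

section
/- Let θ, z : (a,b) → ℝ be C¹ functions satisfying θ'(t) = √(1 - cos²θ(t)/z(t)²) > 0 and z'(t) = sin θ(t) on (a,b), with z > |cos θ|, and suppose θ(t) → 0 and z(t) → 1 as t → a⁺. Then (z(t) - cos θ(t))/sin θ(t) → 0 as t → a⁺. -/
/-!
Write `f = z - cos θ`. Along the flow `f' = sin θ (1 + θ') ≤ 2θ`, and `θ' ≥ √f` as soon as
`z² ≤ z + cos θ`, which holds near `a` since `z, cos θ → 1`. Hence
`((2/3) f^(3/2))' = √f f' ≤ 2θθ' = (θ²)'`, and since both sides vanish at `a`,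
`(2/3) f^(3/2) ≤ θ²` near `a`. This gives `(f/θ)³ ≤ (9/4) θ → 0`, and `sin θ ~ θ`.
-/

open Filter Set Real Topology

lemma MonotoneOn.le_of_tendsto_nhdsGT {β : Type*} [Preorder β] [TopologicalSpace β]
    [ClosedIicTopology β] {f : ℝ → β} {a b t : ℝ} {L : β} (hf : MonotoneOn f (Ioo a b))
    (hlim : Tendsto f (𝓝[>] a) (𝓝 L)) (ht : t ∈ Ioo a b) : L ≤ f t :=
  le_of_tendsto hlim <| mem_of_superset (Ioo_mem_nhdsGT ht.1) fun _ hs ↦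
    hf ⟨hs.1, hs.2.trans ht.2⟩ ht hs.2.le

lemma StrictMonoOn.lt_of_tendsto_nhdsGT {β : Type*} [Preorder β] [TopologicalSpace β]
    [ClosedIicTopology β] {f : ℝ → β} {a b t : ℝ} {L : β} (hf : StrictMonoOn f (Ioo a b))
    (hlim : Tendsto f (𝓝[>] a) (𝓝 L)) (ht : t ∈ Ioo a b) : L < f t := by
  have hs : (a + t) / 2 ∈ Ioo a b := ⟨by linarith [ht.1], by linarith [ht.1, ht.2]⟩
  exact (hf.monotoneOn.le_of_tendsto_nhdsGT hlim hs).trans_lt (hf hs ht (by linarith [ht.1]))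

lemma tendsto_zero_of_pow_le {α : Type*} {l : Filter α} {x y : α → ℝ} {n : ℕ}
    (hx : ∀ᶠ t in l, 0 ≤ x t) (hxy : ∀ᶠ t in l, x t ^ n ≤ y t) (hy : Tendsto y l (𝓝 0)) :
    Tendsto x l (𝓝 0) := by
  refine tendsto_order.2 ⟨fun ε hε ↦ hx.mono fun t ht ↦ hε.trans_le ht, fun ε hε ↦ ?_⟩
  filter_upwards [hx, hxy, tendsto_order.1 hy |>.2 _ (pow_pos hε n)] with t hxt hxyt hyt
  exact lt_of_pow_lt_pow_left₀ n hε.le (hxyt.trans_lt hyt)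

lemma sqrt_sub_le_sqrt_one_sub_sq_div_sq {c z : ℝ} (hcz : c < z) (hz : z ^ 2 ≤ z + c) :
    √(z - c) ≤ √(1 - c ^ 2 / z ^ 2) := by
  have hz0 : z ≠ 0 := by rintro rfl; nlinarith
  refine sqrt_le_sqrt ?_
  have key : 1 - c ^ 2 / z ^ 2 - (z - c) = (z - c) * (z + c - z ^ 2) / z ^ 2 := by
    field_simp; ring
  have : 0 ≤ (z - c) * (z + c - z ^ 2) / z ^ 2 := by
    apply div_nonneg (mul_nonneg _ _) (sq_nonneg z) <;> linarith
  linarith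

lemma sqrt_sub_cos_mul_sin_mul_le {θ z : ℝ} (hθ : 0 ≤ θ) (hθπ : θ ≤ π) (hcz : cos θ < z)
    (hz : z ^ 2 ≤ z + cos θ) :
    √(z - cos θ) * (sin θ * (1 + √(1 - cos θ ^ 2 / z ^ 2)))
      ≤ 2 * θ * √(1 - cos θ ^ 2 / z ^ 2) := by
  set s := √(1 - cos θ ^ 2 / z ^ 2)
  have hs1 : s ≤ 1 := sqrt_le_one.2 (by linarith [div_nonneg (sq_nonneg (cos θ)) (sq_nonneg z)])
  calc √(z - cos θ) * (sin θ * (1 + s)) ≤ s * (θ * 2) := by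
        gcongr
        · exact mul_nonneg (sin_nonneg_of_nonneg_of_le_pi hθ hθπ) (by positivity)
        · exact sqrt_sub_le_sqrt_one_sub_sq_div_sq hcz hz
        · exact sin_le hθ
        · linarith
    _ = 2 * θ * s := by ring

lemma hasDerivAt_sub_cos_rpow {θ z : ℝ → ℝ} {θ' t : ℝ} (hθ : HasDerivAt θ θ' t)
    (hz : HasDerivAt z (sin (θ t)) t) :
    HasDerivAt (fun t ↦ 2 / 3 * (z t - cos (θ t)) ^ (3 / 2 : ℝ))
      (√(z t - cos (θ t)) * (sin (θ t) * (1 + θ'))) t := by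
  have hf : HasDerivAt (fun t ↦ z t - cos (θ t)) (sin (θ t) * (1 + θ')) t := by
    refine (hz.sub ((hasDerivAt_cos (θ t)).comp t hθ)).congr_deriv ?_; ring
  refine ((hf.rpow_const (p := 3 / 2) (Or.inr (by norm_num))).const_mul (2 / 3)).congr_deriv ?_
  rw [sqrt_eq_rpow]; norm_num; ring

lemma div_pow_three_le_of_rpow_le {x y : ℝ} (hx : 0 ≤ x) (hy : 0 < y)
    (h : 2 / 3 * x ^ (3 / 2 : ℝ) ≤ y ^ 2) : (x / y) ^ 3 ≤ 9 / 4 * y := by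
  have hcube : x ^ 3 ≤ 9 / 4 * y ^ 4 := by
    have hsq : (x ^ (3 / 2 : ℝ)) ^ 2 = x ^ 3 := by
      rw [← rpow_mul_natCast hx]; norm_num
    nlinarith [rpow_nonneg hx (3 / 2 : ℝ)]
  rw [div_pow, div_le_iff₀ (by positivity)]
  linarith [show 9 / 4 * y * y ^ 3 = 9 / 4 * y ^ 4 by ring]

lemma eventually_rpow_sub_cos_le_sq {a b : ℝ} {θ z θ' : ℝ → ℝ} (hab : a < b)
    (hθ : ∀ t ∈ Ioo a b, HasDerivAt θ (θ' t) t)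
    (hθ'eq : ∀ t ∈ Ioo a b, θ' t = √(1 - cos (θ t) ^ 2 / z t ^ 2))
    (hz' : ∀ t ∈ Ioo a b, HasDerivAt z (sin (θ t)) t)
    (hcz : ∀ t ∈ Ioo a b, cos (θ t) < z t) (hθnonneg : ∀ t ∈ Ioo a b, 0 ≤ θ t)
    (hθlim : Tendsto θ (𝓝[>] a) (𝓝 0)) (hzlim : Tendsto z (𝓝[>] a) (𝓝 1)) :
    ∀ᶠ t in 𝓝[>] a, 2 / 3 * (z t - cos (θ t)) ^ (3 / 2 : ℝ) ≤ θ t ^ 2 := by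
  have hcos : Tendsto (fun t ↦ cos (θ t)) (𝓝[>] a) (𝓝 1) :=
    (continuous_cos.tendsto' 0 1 cos_zero).comp hθlim
  have hmem : ∀ᶠ t in 𝓝[>] a, t ∈ Ioo a b := Ioo_mem_nhdsGT hab
  have hθπ : ∀ᶠ t in 𝓝[>] a, θ t ≤ π := hθlim.eventually (eventually_le_nhds pi_pos)
  have hzsq : ∀ᶠ t in 𝓝[>] a, z t ^ 2 < z t + cos (θ t) :=
    (hzlim.pow 2).eventually_lt (hzlim.add hcos) (by norm_num)
  obtain ⟨c, hac, hsub⟩ := mem_nhdsGT_iff_exists_Ioo_subset.1 (hmem.and (hθπ.and hzsq))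
  set w := fun t ↦ θ t ^ 2 - 2 / 3 * (z t - cos (θ t)) ^ (3 / 2 : ℝ)
  have hw : ∀ t ∈ Ioo a c, HasDerivAt w
      (2 * θ t * θ' t - √(z t - cos (θ t)) * (sin (θ t) * (1 + θ' t))) t := fun t ht ↦
    (((hθ t (hsub ht).1).pow 2).sub (hasDerivAt_sub_cos_rpow (hθ t (hsub ht).1)
      (hz' t (hsub ht).1))).congr_deriv (by ring)
  have hmono : MonotoneOn w (Ioo a c) := by
    refine monotoneOn_of_hasDerivWithinAt_nonneg (convex_Ioo a c)
      (fun t ht ↦ (hw t ht).continuousAt.continuousWithinAt)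
      (fun t ht ↦ (hw t (interior_subset ht)).hasDerivWithinAt) fun t ht ↦ ?_
    obtain ⟨htab, htπ, htz⟩ := hsub (interior_subset ht)
    rw [sub_nonneg, hθ'eq t htab]
    exact sqrt_sub_cos_mul_sin_mul_le (hθnonneg t htab) htπ (hcz t htab) htz.le
  have hwlim : Tendsto w (𝓝[>] a) (𝓝 0) := by
    have := (hθlim.pow 2).sub (((hzlim.sub hcos).rpow_const (p := 3 / 2)
      (Or.inr (by norm_num))).const_mul (2 / 3))
    simpa [zero_rpow] using this
  filter_upwards [Ioo_mem_nhdsGT hac] with t ht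
  exact sub_nonneg.1 (hmono.le_of_tendsto_nhdsGT hwlim ht)

theorem ratio_tendsto_zero (a b : ℝ) (θ z θ' : ℝ → ℝ)
    (hdom : ∀ t ∈ Set.Ioo a b, |Real.cos (θ t)| < z t)
    (hθ : ∀ t ∈ Set.Ioo a b, HasDerivAt θ (θ' t) t)
    (hθ'eq : ∀ t ∈ Set.Ioo a b,
      θ' t = Real.sqrt (1 - (Real.cos (θ t)) ^ 2 / (z t) ^ 2))
    (hθ'pos : ∀ t ∈ Set.Ioo a b, 0 < θ' t)
    (hz' : ∀ t ∈ Set.Ioo a b, HasDerivAt z (Real.sin (θ t)) t)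
    (hθlim : Filter.Tendsto θ (nhdsWithin a (Set.Ioo a b)) (nhds 0))
    (hzlim : Filter.Tendsto z (nhdsWithin a (Set.Ioo a b)) (nhds 1)) :
    Filter.Tendsto (fun t => (z t - Real.cos (θ t)) / Real.sin (θ t))
      (nhdsWithin a (Set.Ioo a b)) (nhds 0) := by
  rcases le_or_gt b a with hba | hab
  · simp [Ioo_eq_empty (not_lt.2 hba)]
  rw [nhdsWithin_Ioo_eq_nhdsGT hab] at hθlim hzlim ⊢
  have hθpos : ∀ t ∈ Ioo a b, 0 < θ t := fun t ↦
    (strictMonoOn_of_hasDerivWithinAt_pos (convex_Ioo a b)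
      (fun t ht ↦ (hθ t ht).continuousAt.continuousWithinAt)
      (fun t ht ↦ (hθ t (interior_subset ht)).hasDerivWithinAt)
      fun t ht ↦ hθ'pos t (interior_subset ht)).lt_of_tendsto_nhdsGT hθlim
  have hcz : ∀ t ∈ Ioo a b, cos (θ t) < z t := fun t ht ↦ (le_abs_self _).trans_lt (hdom t ht)
  have hmem : ∀ᶠ t in 𝓝[>] a, t ∈ Ioo a b := Ioo_mem_nhdsGT hab
  have hratio : Tendsto (fun t ↦ (z t - cos (θ t)) / θ t) (𝓝[>] a) (𝓝 0) := by
    refine tendsto_zero_of_pow_le (n := 3) (y := fun t ↦ 9 / 4 * θ t) ?_ ?_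
      (by simpa using hθlim.const_mul (9 / 4))
    · filter_upwards [hmem] with t ht using div_nonneg (sub_pos.2 (hcz t ht)).le (hθpos t ht).le
    · filter_upwards [hmem, eventually_rpow_sub_cos_le_sq hab hθ hθ'eq hz' hcz
        (fun t ht ↦ (hθpos t ht).le) hθlim hzlim] with t ht h using div_pow_three_le_of_rpow_le (sub_pos.2 (hcz t ht)).le (hθpos t ht) h
  have hsinc : Tendsto (fun t ↦ sinc (θ t)) (𝓝[>] a) (𝓝 1) :=
    (continuous_sinc.tendsto' 0 1 sinc_zero).comp hθlim
  refine (zero_div (1 : ℝ) ▸ hratio.div hsinc one_ne_zero).congr' ?_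
  filter_upwards [hmem] with t ht
  rw [Pi.div_apply, sinc_of_ne_zero (hθpos t ht).ne', div_div_div_cancel_right₀ (hθpos t ht).ne']
end

section
/- Let θ, z : (a,b) → ℝ with z > 0 satisfy θ'² + cos²θ/z² = 1 and z' = sin θ, with θ' > 0 on (a,b). Suppose θ(t) → θ₀ and z(t) → z₀ as t → a⁺, with 0 < θ₀ < π, θ₀ ≠ π/2, sin θ₀ > ε > 0 on (a, t₁] for some t₁ ∈ (a,b) and 0 < z₀ < 1. Then a > -∞. -/
theorem finite_backward_time (a : EReal) (b : ℝ) (θ z θ' : ℝ → ℝ)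
    (θ₀ z₀ ε t₁ : ℝ)
    (hzpos : ∀ t : ℝ, a < (t : EReal) → t < b → 0 < z t)
    (hθ : ∀ t : ℝ, a < (t : EReal) → t < b → HasDerivAt θ (θ' t) t)
    (hz' : ∀ t : ℝ, a < (t : EReal) → t < b → HasDerivAt z (Real.sin (θ t)) t)
    (heq : ∀ t : ℝ, a < (t : EReal) → t < b →
      (θ' t) ^ 2 + (Real.cos (θ t)) ^ 2 / (z t) ^ 2 = 1)
    (hθ'pos : ∀ t : ℝ, a < (t : EReal) → t < b → 0 < θ' t)
    (hθlim : Filter.Tendsto θ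
      (Filter.comap (fun t : ℝ => (t : EReal)) (nhdsWithin a (Set.Ioi a))) (nhds θ₀))
    (hzlim : Filter.Tendsto z
      (Filter.comap (fun t : ℝ => (t : EReal)) (nhdsWithin a (Set.Ioi a))) (nhds z₀))
    (hθ₀pos : 0 < θ₀) (hθ₀lt : θ₀ < Real.pi) (hθ₀ne : θ₀ ≠ Real.pi / 2)
    (hε : 0 < ε)
    (ht₁ : a < (t₁ : EReal) ∧ t₁ < b)
    (hsin : ∀ t : ℝ, a < (t : EReal) → t ≤ t₁ → ε < Real.sin (θ t))
    (hz₀pos : 0 < z₀) (hz₀lt : z₀ < 1) :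
    ⊥ < a := by
  by_contra h
  have ha : a = ⊥ := by
    cases' lt_or_eq_of_le (bot_le : ⊥ ≤ a) with h' h'
    · exact absurd h' h
    · exact h'.symm
  subst ha
  have hbot : ∀ t : ℝ, (⊥ : EReal) < (t : EReal) := fun t => EReal.bot_lt_coe t
  have hc : 0 < z t₁ := hzpos t₁ (hbot t₁) ht₁.2
  set c := z t₁ with hcdef
  set t := t₁ - c / ε - 1 with htdef
  have htlt : t < t₁ := by
    have : 0 < c / ε + 1 := by positivity
    simp only [htdef]; linarith
  have hztpos : 0 < z t := hzpos t (hbot t) (htlt.trans ht₁.2)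
  -- z is differentiable on [t, t₁] with derivative ≥ ε
  have key : ε * (t₁ - t) ≤ z t₁ - z t := by
    have hconv : Convex ℝ (Set.Icc t t₁) := convex_Icc t t₁
    have hdiff : ∀ x ∈ Set.Icc t t₁, HasDerivAt z (Real.sin (θ x)) x := by
      intro x hx
      exact hz' x (hbot x) (lt_of_le_of_lt hx.2 ht₁.2)
    have hcont : ContinuousOn z (Set.Icc t t₁) := fun x hx =>
      (hdiff x hx).continuousAt.continuousWithinAt
    have hdiffOn : DifferentiableOn ℝ z (interior (Set.Icc t t₁)) := fun x hx =>
      ((hdiff x (interior_subset hx)).differentiableAt).differentiableWithinAt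
    have hbound : ∀ x ∈ interior (Set.Icc t t₁), ε ≤ deriv z x := by
      intro x hx
      rw [(hdiff x (interior_subset hx)).deriv]
      exact le_of_lt (hsin x (hbot x) (interior_subset hx).2)
    have := hconv.mul_sub_le_image_sub_of_le_deriv hcont hdiffOn hbound
      t ⟨le_refl t, le_of_lt htlt⟩ t₁ ⟨le_of_lt htlt, le_refl t₁⟩ (le_of_lt htlt)
    exact this
  have : t₁ - t = c / ε + 1 := by simp [htdef]; ring
  rw [this] at key
  have : ε * (c / ε + 1) = c + ε := by field_simp
  rw [this] at key
  linarith
end
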